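/- arXiv:1411.1749 — 2 statements merged into one kernel-verified Lean document; each statement's English description precedes it below -/
import Mathlib

section
/- Let G be a simple graph with n vertices and e edges. Then, as integers, e·(n − e − 1) ≤ f(G) ≤ e·(n − 2). -/
open Finset

open Classical in
/-- A triple of distinct vertices is *frustrated* if it induces an odd number of edges. -/
noncomputable def frustrated {V : Type*} (G : SimpleGraph V) (u v w : V) : Prop :=
  Odd ((if G.Adj u v then 1 else 0) + (if G.Adj u w then 1 else 0) +
       (if G.Adj v w then 1 else 0) : ℕ)

/-- The number of frustrated triangles of `G`: the number of 3-element vertex subsets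
inducing an odd number of edges. -/
noncomputable def fCount {V : Type*} [Fintype V] [DecidableEq V] (G : SimpleGraph V) : ℕ := by
  classical
  exact ((Finset.univ.powersetCard 3).filter
    (fun s : Finset V => ∃ u v w : V, u ≠ v ∧ u ≠ w ∧ v ≠ w ∧ s = {u, v, w} ∧
      frustrated G u v w)).card

/-!
Every frustrated triangle contains an edge, so it is `insert w a` for an edge `a` and a vertex
`w ∉ a`; there are `e (n - 2)` such pairs. Conversely, if `w` is adjacent to neither endpoint of
the edge `a`, then `insert w a` spans exactly one edge, hence is frustrated, and `a` is recovered
from it as its only edge. At most `deg u + deg v ≤ e + 1` vertices are adjacent to an endpoint of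
the edge `s(u, v)`, which leaves at least `n - e - 1` choices of `w` for each edge.
-/

open Fintype

variable {V : Type*}

lemma frustrated.adj_or_adj_or_adj {G : SimpleGraph V} {u v w : V} (h : frustrated G u v w) :
    G.Adj u v ∨ G.Adj u w ∨ G.Adj v w := by
  by_contra! hnot
  simp [frustrated, hnot.1, hnot.2.1, hnot.2.2] at h

lemma frustrated_of_not_adj_of_not_adj {G : SimpleGraph V} {u v w : V} (huv : ¬G.Adj u v)
    (huw : ¬G.Adj u w) (hvw : G.Adj v w) : frustrated G u v w := by
  simp [frustrated, huv, huw, hvw]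

namespace SimpleGraph

variable [Fintype V] [DecidableEq V] (G : SimpleGraph V)

open Classical in
noncomputable def frustratedTriples : Finset (Finset V) :=
  (univ.powersetCard 3).filter
    (fun s : Finset V => ∃ u v w : V, u ≠ v ∧ u ≠ w ∧ v ≠ w ∧ s = {u, v, w} ∧ frustrated G u v w)

lemma fCount_eq_card_frustratedTriples : fCount G = #G.frustratedTriples := rfl

variable {G} in
lemma mem_frustratedTriples {s : Finset V} : s ∈ G.frustratedTriples ↔
    ∃ u v w : V, u ≠ v ∧ u ≠ w ∧ v ≠ w ∧ s = {u, v, w} ∧ frustrated G u v w := by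
  classical
  simp only [frustratedTriples, mem_filter, mem_powersetCard, subset_univ, true_and,
    and_iff_right_iff_imp]
  rintro ⟨u, v, w, huv, huw, hvw, rfl, -⟩
  exact card_eq_three.2 ⟨u, v, w, huv, huw, hvw, rfl⟩

variable [DecidableRel G.Adj]

def edgeExtensions : Finset (Finset V) :=
  G.edgeFinset.biUnion fun a => (a.toFinset)ᶜ.image (insert · a.toFinset)

lemma insert_mem_edgeExtensions_of_adj {u v w : V} (huv : G.Adj u v) (hwu : w ≠ u)
    (hwv : w ≠ v) : ({u, v, w} : Finset V) ∈ G.edgeExtensions := by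
  simp only [edgeExtensions, mem_biUnion, mem_image, mem_compl]
  refine ⟨s(u, v), by simpa using huv, w, by simp [hwu, hwv], ?_⟩
  rw [Sym2.toFinset_mk_eq, insert_comm, pair_comm w, insert_comm]

lemma frustratedTriples_subset_edgeExtensions : G.frustratedTriples ⊆ G.edgeExtensions := by
  intro s hs
  obtain ⟨u, v, w, huv, huw, hvw, rfl, hfr⟩ := mem_frustratedTriples.1 hs
  rcases hfr.adj_or_adj_or_adj with h | h | h
  · exact G.insert_mem_edgeExtensions_of_adj h huw.symm hvw.symm
  · rw [pair_comm]
    exact G.insert_mem_edgeExtensions_of_adj h huv.symm hvw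
  · rw [insert_comm, pair_comm u]
    exact G.insert_mem_edgeExtensions_of_adj h huv huw

lemma card_frustratedTriples_le :
    (#G.frustratedTriples : ℤ) ≤ #G.edgeFinset * ((card V : ℤ) - 2) := by
  have hcompl : ∀ a ∈ G.edgeFinset, (#(a.toFinset)ᶜ : ℤ) = card V - 2 := by
    intro a ha
    have hpair := Sym2.card_toFinset_of_not_isDiag a (G.not_isDiag_of_mem_edgeSet (by simpa using ha))
    have := card_compl_add_card a.toFinset
    omega
  calc (#G.frustratedTriples : ℤ)
      ≤ #G.edgeExtensions := by
        exact_mod_cast card_le_card G.frustratedTriples_subset_edgeExtensions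
    _ ≤ ∑ a ∈ G.edgeFinset, (#(a.toFinset)ᶜ : ℤ) := by
        exact_mod_cast card_biUnion_le.trans (sum_le_sum fun a _ => card_image_le)
    _ = #G.edgeFinset * ((card V : ℤ) - 2) := by
        rw [sum_congr rfl hcompl, sum_const, nsmul_eq_mul]

def awayFrom (a : Sym2 V) : Finset V := (a.toFinset.biUnion (G.neighborFinset ·))ᶜ

variable {G}

lemma mem_awayFrom_mk {u v w : V} : w ∈ G.awayFrom s(u, v) ↔ ¬G.Adj u w ∧ ¬G.Adj v w := by
  simp [awayFrom, Sym2.toFinset_mk_eq]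

lemma notMem_toFinset_of_mem_awayFrom {a : Sym2 V} {w : V} (ha : a ∈ G.edgeFinset)
    (hw : w ∈ G.awayFrom a) : w ∉ a.toFinset := by
  induction a using Sym2.ind with
  | _ u v =>
    have huv : G.Adj u v := by simpa using ha
    rw [mem_awayFrom_mk] at hw
    rw [Sym2.toFinset_mk_eq, mem_insert, mem_singleton]
    rintro (rfl | rfl)
    exacts [hw.2 huv.symm, hw.1 huv]

-- Among `w` and the endpoints of `a`, only the endpoints of `a` are adjacent.
lemma eq_of_toFinset_subset_insert {a b : Sym2 V} {w : V} (ha : a ∈ G.edgeFinset)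
    (hw : w ∈ G.awayFrom a) (hb : b ∈ G.edgeFinset) (hsub : b.toFinset ⊆ insert w a.toFinset) :
    b = a := by
  induction a using Sym2.ind with
  | _ u v =>
  induction b using Sym2.ind with
  | _ x y =>
    have huv : G.Adj u v := by simpa using ha
    have hxy : G.Adj x y := by simpa using hb
    rw [mem_awayFrom_mk] at hw
    simp only [Sym2.toFinset_mk_eq, insert_subset_iff, mem_insert, mem_singleton,
      singleton_subset_iff] at hsub
    obtain ⟨hx | hx | hx, hy | hy | hy⟩ := hsub <;> subst hx hy <;>
      simp_all [adj_comm, Sym2.eq_swap]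

lemma degree_add_degree_le_of_adj {u v : V} (h : G.Adj u v) :
    G.degree u + G.degree v ≤ #G.edgeFinset + 1 := by
  have hinter : G.incidenceFinset u ∩ G.incidenceFinset v = {s(u, v)} := by
    rw [← coe_inj, coe_inter, coe_incidenceFinset, coe_incidenceFinset,
      incidenceSet_inter_incidenceSet_of_adj G h, coe_singleton]
  have hunion : #(G.incidenceFinset u ∪ G.incidenceFinset v) ≤ #G.edgeFinset :=
    card_le_card (union_subset (G.incidenceFinset_subset u) (G.incidenceFinset_subset v))
  have := card_union_add_card_inter (G.incidenceFinset u) (G.incidenceFinset v)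
  simp only [hinter, card_singleton, card_incidenceFinset_eq_degree] at this
  omega

lemma card_awayFrom_ge {a : Sym2 V} (ha : a ∈ G.edgeFinset) :
    (card V : ℤ) - #G.edgeFinset - 1 ≤ #(G.awayFrom a) := by
  induction a using Sym2.ind with
  | _ u v =>
    have huv : G.Adj u v := by simpa using ha
    have hcover : #(s(u, v).toFinset.biUnion (G.neighborFinset ·)) ≤ G.degree u + G.degree v := by
      rw [Sym2.toFinset_mk_eq]
      exact card_biUnion_le.trans_eq (by simp [sum_pair huv.ne])
    have := card_compl_add_card (s(u, v).toFinset.biUnion (G.neighborFinset ·))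
    have := degree_add_degree_le_of_adj huv
    rw [awayFrom]
    omega

lemma sum_card_awayFrom_le : ∑ a ∈ G.edgeFinset, #(G.awayFrom a) ≤ #G.frustratedTriples := by
  rw [← Finset.card_sigma]
  refine card_le_card_of_injOn (fun p => insert p.2 p.1.toFinset) ?_ ?_
  · rintro ⟨a, w⟩ hp
    simp only [coe_sigma, Set.mem_sigma_iff, mem_coe] at hp
    obtain ⟨ha, hw⟩ := hp
    induction a using Sym2.ind with
    | _ u v =>
      have huv : G.Adj u v := by simpa using ha
      have hw' := notMem_toFinset_of_mem_awayFrom ha hw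
      rw [mem_awayFrom_mk] at hw
      rw [Sym2.toFinset_mk_eq, mem_insert, mem_singleton, not_or] at hw'
      refine mem_frustratedTriples.2 ⟨w, u, v, hw'.1, hw'.2, huv.ne, by simp [Sym2.toFinset_mk_eq],
        frustrated_of_not_adj_of_not_adj ?_ ?_ huv⟩
      exacts [fun h => hw.1 h.symm, fun h => hw.2 h.symm]
  · rintro ⟨a, w⟩ hp ⟨b, x⟩ hq heq
    simp only [coe_sigma, Set.mem_sigma_iff, mem_coe] at hp hq heq
    have hba : b = a := eq_of_toFinset_subset_insert hp.1 hp.2 hq.1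
      (heq ▸ subset_insert x b.toFinset)
    subst hba
    have hwx := heq ▸ mem_insert_self w b.toFinset
    rw [mem_insert] at hwx
    obtain rfl := hwx.resolve_right (notMem_toFinset_of_mem_awayFrom hp.1 hp.2)
    rfl

lemma card_frustratedTriples_ge :
    #G.edgeFinset * ((card V : ℤ) - #G.edgeFinset - 1) ≤ #G.frustratedTriples := by
  calc #G.edgeFinset * ((card V : ℤ) - #G.edgeFinset - 1)
      = ∑ _a ∈ G.edgeFinset, ((card V : ℤ) - #G.edgeFinset - 1) := by
        rw [sum_const, nsmul_eq_mul]
    _ ≤ ∑ a ∈ G.edgeFinset, (#(G.awayFrom a) : ℤ) := sum_le_sum fun a ha => card_awayFrom_ge ha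
    _ ≤ #G.frustratedTriples := by exact_mod_cast sum_card_awayFrom_le

end SimpleGraph

theorem fCount_bounds
    (n : ℕ) (G : SimpleGraph (Fin n)) (e : ℕ) (he : G.edgeSet.ncard = e) :
    (e : ℤ) * ((n : ℤ) - e - 1) ≤ (fCount G : ℤ) ∧ (fCount G : ℤ) ≤ (e : ℤ) * ((n : ℤ) - 2) := by
  classical
  have hcard : #G.edgeFinset = e := by
    rw [← he, ← Set.ncard_coe_finset, SimpleGraph.coe_edgeFinset]
  have hlower := G.card_frustratedTriples_ge
  have hupper := G.card_frustratedTriples_le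
  rw [Fintype.card_fin, hcard, ← G.fCount_eq_card_frustratedTriples] at hlower hupper
  exact ⟨hlower, hupper⟩
end

section
/- Let G be a simple graph on n vertices with e edges. If n is even, then f(G) is even; if n is odd, then f(G) ≡ e (mod 2). -/
/-!
Modulo 2, a 3-set is frustrated exactly when it contains an odd number of edges, so f(G) is
congruent to the total number of (edge, 3-set containing it) incidences. Each edge lies in exactly
n - 2 of the 3-sets, hence f(G) ≡ e(n - 2) ≡ en (mod 2).
-/

open Finset

theorem Finset.card_filter_powersetCard_superset {α : Type*} [DecidableEq α] {t u : Finset α}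
    (htu : t ⊆ u) {k : ℕ} (hk : #t ≤ k) :
    #{s ∈ u.powersetCard k | t ⊆ s} = (#u - #t).choose (k - #t) := by
  rw [← card_sdiff_of_subset htu, ← card_powersetCard]
  refine card_nbij' (· \ t) (· ∪ t) ?_ ?_ ?_ ?_ <;> intro s hs <;>
    simp only [mem_coe, mem_filter, mem_powersetCard, subset_sdiff] at hs ⊢
  · refine ⟨⟨sdiff_subset.trans hs.1.1, sdiff_disjoint⟩, ?_⟩
    rw [card_sdiff_of_subset hs.2, hs.1.2]
  · refine ⟨⟨union_subset hs.1.1 htu, ?_⟩, subset_union_right⟩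
    rw [card_union_of_disjoint hs.1.2, hs.2]
    omega
  · exact sdiff_union_of_subset hs.2
  · exact union_sdiff_cancel_right hs.1.2

theorem Finset.natCast_card_filter_odd {ι : Type*} (s : Finset ι) (f : ι → ℕ) :
    (#{i ∈ s | Odd (f i)} : ZMod 2) = ∑ i ∈ s, (f i : ZMod 2) := by
  rw [card_filter, Nat.cast_sum]
  refine sum_congr rfl fun i _ => ?_
  by_cases h : Odd (f i)
  · simp [h, h.natCast_zmod_two]
  · simp [h, (Nat.not_odd_iff_even.mp h).natCast_zmod_two]

namespace SimpleGraph

variable {V : Type*} [DecidableEq V] (G : SimpleGraph V) [Fintype G.edgeSet]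

def edgesWithin (s : Finset V) : Finset (Sym2 V) := {e ∈ G.edgeFinset | e ∈ s.sym2}

theorem card_edgesWithin_triple [DecidableRel G.Adj] {u v w : V} (huv : u ≠ v) (huw : u ≠ w)
    (hvw : v ≠ w) :
    #(G.edgesWithin {u, v, w}) =
      (if G.Adj u v then 1 else 0) + (if G.Adj u w then 1 else 0) +
        (if G.Adj v w then 1 else 0) := by
  have hedges : G.edgesWithin {u, v, w} =
      {e ∈ ({s(u, v), s(u, w), s(v, w)} : Finset (Sym2 V)) | e ∈ G.edgeSet} := by
    ext e
    induction e with | h a b => ?_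
    simp only [edgesWithin, mem_filter, mem_edgeFinset, mk_mem_sym2_iff, mem_insert,
      mem_singleton, Sym2.eq_iff, mem_edgeSet]
    aesop
  rw [hedges, card_filter, sum_insert, sum_insert, sum_singleton]
  · simp [add_assoc]
  · simp [huw, huv]
  · simp [huw, huv, hvw]

theorem odd_card_edgesWithin_triple_iff {u v w : V} (huv : u ≠ v) (huw : u ≠ w)
    (hvw : v ≠ w) :
    Odd #(G.edgesWithin {u, v, w}) ↔ frustrated G u v w := by
  classical
  rw [frustrated, card_edgesWithin_triple G huv huw hvw]

theorem fCount_eq_card_filter_odd [Fintype V] :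
    fCount G = #{s ∈ univ.powersetCard 3 | Odd #(G.edgesWithin s)} := by
  classical
  rw [fCount]
  refine congrArg card (filter_congr fun s hs => ?_)
  constructor
  · rintro ⟨u, v, w, huv, huw, hvw, rfl, hf⟩
    exact (G.odd_card_edgesWithin_triple_iff huv huw hvw).mpr hf
  · obtain ⟨u, v, w, huv, huw, hvw, rfl⟩ := card_eq_three.mp (mem_powersetCard_univ.mp hs)
    exact fun h =>
      ⟨u, v, w, huv, huw, hvw, rfl, (G.odd_card_edgesWithin_triple_iff huv huw hvw).mp h⟩

theorem sum_card_edgesWithin [Fintype V] {k : ℕ} (hk : 2 ≤ k) :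
    ∑ s ∈ univ.powersetCard k, #(G.edgesWithin s) =
      #G.edgeFinset * (Fintype.card V - 2).choose (k - 2) := by
  change ∑ s ∈ _, #(bipartiteAbove (fun (s : Finset V) e => e ∈ s.sym2) G.edgeFinset s) = _
  rw [sum_card_bipartiteAbove_eq_sum_card_bipartiteBelow, ← smul_eq_mul, ← sum_const]
  refine sum_congr rfl fun e he => ?_
  induction e with | h a b => ?_
  have hab : a ≠ b := G.ne_of_adj (G.mem_edgeFinset.mp he)
  have hsub : ∀ s : Finset V, s(a, b) ∈ s.sym2 ↔ {a, b} ⊆ s := by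
    simp [insert_subset_iff]
  rw [bipartiteBelow, filter_congr fun s _ => hsub s,
    card_filter_powersetCard_superset (subset_univ _) (by rwa [card_pair hab]), card_univ,
    card_pair hab]

theorem cast_fCount_eq_mul [Fintype V] :
    (fCount G : ZMod 2) = #G.edgeFinset * Fintype.card V := by
  rw [fCount_eq_card_filter_odd, Finset.natCast_card_filter_odd, ← Nat.cast_sum,
    sum_card_edgesWithin G (by norm_num), Nat.choose_one_right]
  obtain hE | ⟨e, he⟩ := G.edgeFinset.eq_empty_or_nonempty
  · simp [hE]
  induction e with | h a b => ?_
  have hV : 2 ≤ Fintype.card V :=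
    Fintype.one_lt_card_iff.mpr ⟨a, b, G.ne_of_adj (G.mem_edgeFinset.mp he)⟩
  rw [Nat.cast_mul, Nat.cast_sub hV, Nat.cast_ofNat, show (2 : ZMod 2) = 0 from rfl, sub_zero]

end SimpleGraph

theorem fCount_parity
    (n : ℕ) (G : SimpleGraph (Fin n)) (e : ℕ) (he : G.edgeSet.ncard = e) :
    (Even n → Even (fCount G)) ∧ (Odd n → fCount G % 2 = e % 2) := by
  classical
  have hparity := G.cast_fCount_eq_mul
  rw [← SimpleGraph.coe_edgeFinset, Set.ncard_coe_finset] at he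
  rw [he, Fintype.card_fin] at hparity
  refine ⟨fun hn => ?_, fun hn => ?_⟩
  · rw [← ZMod.natCast_eq_zero_iff_even, hparity, hn.natCast_zmod_two, mul_zero]
  · rw [← ZMod.natCast_eq_natCast_iff', hparity, hn.natCast_zmod_two, mul_one]
end
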